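/- Let n = 10 and W = 3. Define X : ℤ → ℝ by X(t) = 1/3 for t ∈ {1,2,3,6,7,8}, X(t) = 1/4 for t ∈ {4,5,9,10}, and X(t) = 0 otherwise. Then: (i) 0 ≤ X(t) ≤ 1 for all t; (ii) ∑_{t=1}^{10} X(t) = 3; (iii) for all t ∈ {1,...,10} and all t'' ∈ {t, t+1, t+2}, X(t) - X(t-1) ≤ X(t''); but (iv) there is no nonnegative S : ℤ → ℝ with S(t) = 0 for t ≤ 0, ∑_{t=1}^{10} S(t) = 1, and X(t) = ∑_{t'=t-2}^{t} S(t') for all t ∈ {1,...,10}. -/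
import Mathlib


noncomputable def X5 : ℤ → ℝ := fun t =>
  if t = 1 ∨ t = 2 ∨ t = 3 ∨ t = 6 ∨ t = 7 ∨ t = 8 then 1/3
  else if t = 4 ∨ t = 5 ∨ t = 9 ∨ t = 10 then 1/4 else 0

lemma icc3 (a : ℤ) : Finset.Icc (a - 2) a = {a - 2, a - 1, a} := by
  ext x; simp [Finset.mem_Icc]; omega

lemma sum3 (f : ℤ → ℝ) (a : ℤ) :
    ∑ t' ∈ Finset.Icc (a - 2) a, f t' = f (a - 2) + f (a - 1) + f a := by
  rw [icc3, Finset.sum_insert (by simp only [Finset.mem_insert, Finset.mem_singleton]; omega), Finset.sum_insert (by simp only [Finset.mem_insert, Finset.mem_singleton]; omega),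
    Finset.sum_singleton, add_assoc]

lemma sum10 (f : ℤ → ℝ) :
    ∑ t ∈ Finset.Icc (1 : ℤ) 10, f t =
      f 1 + f 2 + f 3 + f 4 + f 5 + f 6 + f 7 + f 8 + f 9 + f 10 := by
  rw [show Finset.Icc (1:ℤ) 10 = {1,2,3,4,5,6,7,8,9,10} from by decide]
  norm_num [Finset.sum_insert, Finset.mem_insert]
  ring

theorem stmt5 :
    (∀ t : ℤ, 0 ≤ X5 t ∧ X5 t ≤ 1) ∧
    (∑ t ∈ Finset.Icc (1 : ℤ) 10, X5 t = 3) ∧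
    (∀ t ∈ Finset.Icc (1 : ℤ) 10, ∀ t'' ∈ Finset.Icc t (t + 2), X5 t - X5 (t - 1) ≤ X5 t'') ∧
    ¬ ∃ S : ℤ → ℝ, (∀ t, 0 ≤ S t) ∧ (∀ t ≤ 0, S t = 0) ∧
      (∑ t ∈ Finset.Icc (1 : ℤ) 10, S t = 1) ∧
      (∀ t ∈ Finset.Icc (1 : ℤ) 10, X5 t = ∑ t' ∈ Finset.Icc (t - 2) t, S t') := by
  refine ⟨?_, ?_, ?_, ?_⟩
  · intro t
    unfold X5
    split_ifs <;> norm_num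
  · rw [sum10]
    norm_num [X5]
  · intro t ht t'' ht''
    simp only [Finset.mem_Icc] at ht ht''
    obtain ⟨h1, h2⟩ := ht
    obtain ⟨h3, h4⟩ := ht''
    interval_cases t <;> interval_cases t'' <;> norm_num [X5]
  · rintro ⟨S, hS0, hSneg, hSsum, hX⟩
    have key : ∀ t : ℤ, 1 ≤ t → t ≤ 10 → X5 t = S (t - 2) + S (t - 1) + S t := by
      intro t h1 h2
      have := hX t (Finset.mem_Icc.mpr ⟨h1, h2⟩)
      rw [this, sum3]
    have e1 := key 1 (by norm_num) (by norm_num)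
    have e2 := key 2 (by norm_num) (by norm_num)
    have e3 := key 3 (by norm_num) (by norm_num)
    have e4 := key 4 (by norm_num) (by norm_num)
    have e5 := key 5 (by norm_num) (by norm_num)
    have e6 := key 6 (by norm_num) (by norm_num)
    have e7 := key 7 (by norm_num) (by norm_num)
    have e8 := key 8 (by norm_num) (by norm_num)
    have e9 := key 9 (by norm_num) (by norm_num)
    have e10 := key 10 (by norm_num) (by norm_num)
    norm_num [X5] at e1 e2 e3 e4 e5 e6 e7 e8 e9 e10
    have hn1 := hSneg (-1) (by norm_num)
    have hn0 := hSneg 0 (by norm_num)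
    rw [sum10] at hSsum
    linarith
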